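/- For any partition β and symmetric functions f, g, the skewing operator applied to a Kronecker product satisfies D_β(f ∗ g) = Σ_{λ,μ} g_{β,λ,μ} D_λ(f) ∗ D_μ(g), where g_{β,λ,μ} = ⟨s_β ∗ s_λ, s_μ⟩ are Kronecker coefficients and the sum is over all pairs of partitions λ, μ. -/

import Mathlib

/-!
Paired with a power sum `p_τ`, the Kronecker product becomes the pointwise product
`⟨f ∗ g, p_τ⟩ = ⟨f, p_τ⟩ ⟨g, p_τ⟩`; together with `p_ρ p_τ = p_{ρ ∪ τ}` this makes every
`D_{p_ρ}` multiplicative for `∗`. Writing `s_β = ∑ b_ρ p_ρ` gives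
`D_β(f ∗ g) = ∑_ρ b_ρ D_{p_ρ} f ∗ D_{p_ρ} g`. Expanding `D_{p_ρ} f` through the Schur
expansion of `p_ρ`, and using `s_β ∗ s_λ = ∑_ρ b_ρ ⟨s_λ, p_ρ⟩ p_ρ`, regroups this as
`∑_λ D_λ f ∗ D_{s_β ∗ s_λ} g`; expanding `s_β ∗ s_λ` in Schur functions then produces the
Kronecker coefficients.
-/

open scoped TensorProduct Classical

noncomputable section

/-- The single-row Young diagram with `k` boxes, whose Schur function is `h_k`
and whose power sum is `p_k`. -/
def rowDiagram (k : ℕ) : YoungDiagram :=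
  YoungDiagram.ofRowLens [k] (List.sortedGE_iff_pairwise.mpr (List.pairwise_singleton _ k))

/-- The quantity `z_λ = ∏ i^{m_i} m_i!` attached to a partition (Young diagram). -/
def zee (μ : YoungDiagram) : ℚ :=
  ((μ.rowLens.prod * (μ.rowLens.dedup.map fun i => (μ.rowLens.count i).factorial).prod : ℕ) : ℚ)

/-- The ring of symmetric functions over `ℚ`, presented with its Schur basis `s`,
its power-sum basis `p`, the Hall inner product (for which the Schur functions are
orthonormal and `⟨p_λ, p_μ⟩ = δ_{λμ} z_λ`), the skewing operators `D f` (adjoint of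
multiplication by `f`), and the Kronecker product `kron`
(determined by `p_λ ∗ p_μ = δ_{λμ} z_λ p_λ`). -/
structure SymmFn (Λ : Type*) [CommRing Λ] [Algebra ℚ Λ] where
  /-- the Schur basis -/
  s : Module.Basis YoungDiagram ℚ Λ
  /-- the power-sum basis -/
  p : Module.Basis YoungDiagram ℚ Λ
  /-- the Hall inner product -/
  inner : Λ →ₗ[ℚ] Λ →ₗ[ℚ] ℚ
  inner_symm : ∀ f g, inner f g = inner g f
  inner_schur : ∀ μ ν, inner (s μ) (s ν) = if μ = ν then 1 else 0
  inner_power : ∀ μ ν, inner (p μ) (p ν) = if μ = ν then zee μ else 0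
  power_mul : ∀ μ : YoungDiagram, p μ = (μ.rowLens.map fun k => p (rowDiagram k)).prod
  /-- the skewing operator `D f`, adjoint of multiplication by `f` -/
  D : Λ → Λ →ₗ[ℚ] Λ
  D_adjoint : ∀ f g h, inner (D f g) h = inner g (f * h)
  /-- the Kronecker (internal) product -/
  kron : Λ →ₗ[ℚ] Λ →ₗ[ℚ] Λ
  kron_power : ∀ μ ν, kron (p μ) (p ν) = if μ = ν then zee μ • p μ else 0

theorem Module.Basis.sum_repr_smul_map {ι R M N : Type*} [Semiring R] [AddCommMonoid M]
    [Module R M] [AddCommMonoid N] [Module R N] (b : Module.Basis ι R M) (Φ : M →ₗ[R] N) (x : M) :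
    ∑ i ∈ (b.repr x).support, b.repr x i • Φ (b i) = Φ x := by
  conv_rhs => rw [← b.linearCombination_repr x]
  simp only [Finsupp.linearCombination_apply, Finsupp.sum, map_sum, map_smul]

theorem Module.Basis.finsum_repr_smul_map {ι R M N : Type*} [Semiring R] [AddCommMonoid M]
    [Module R M] [AddCommMonoid N] [Module R N] (b : Module.Basis ι R M) (Φ : M →ₗ[R] N) (x : M) :
    ∑ᶠ i, b.repr x i • Φ (b i) = Φ x := by
  rw [finsum_eq_sum_of_support_subset (s := (b.repr x).support) _ fun i hi => by
    simpa using Function.support_smul_subset_left (b.repr x) (fun i => Φ (b i)) hi,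
    b.sum_repr_smul_map]

/-- Macdonald's `μ ∪ ν`. -/
def rowUnion (μ ν : YoungDiagram) : YoungDiagram :=
  YoungDiagram.ofRowLens (Multiset.sort ((μ.rowLens : Multiset ℕ) + (ν.rowLens : Multiset ℕ)) (· ≥ ·))
    (List.sortedGE_iff_pairwise.mpr (Multiset.pairwise_sort _ _))

theorem rowUnion_rowLens (μ ν : YoungDiagram) :
    (rowUnion μ ν).rowLens = Multiset.sort ((μ.rowLens : Multiset ℕ) + (ν.rowLens : Multiset ℕ)) (· ≥ ·) := by
  apply YoungDiagram.rowLens_ofRowLens_eq_self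
  intro x hx
  rw [Multiset.mem_sort, Multiset.mem_add] at hx
  rcases hx with hx | hx
  · exact μ.pos_of_mem_rowLens x hx
  · exact ν.pos_of_mem_rowLens x hx

namespace SymmFn

variable {Λ : Type*} [CommRing Λ] [Algebra ℚ Λ] (S : SymmFn Λ)

/-- The operator `U f` of multiplication by `f`. -/
def U (_S : SymmFn Λ) (f : Λ) : Λ →ₗ[ℚ] Λ := LinearMap.mulLeft ℚ f

/-- The skew Schur function `s_{α/θ} = D_{s_θ}(s_α)`. -/
def skew (α θ : YoungDiagram) : Λ := S.D (S.s θ) (S.s α)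

theorem p_mul (μ ν : YoungDiagram) : S.p μ * S.p ν = S.p (rowUnion μ ν) := by
  rw [S.power_mul μ, S.power_mul ν, S.power_mul (rowUnion μ ν), rowUnion_rowLens,
    ← List.prod_append, ← List.map_append]
  refine List.Perm.prod_eq (List.Perm.map _ ?_)
  rw [← Multiset.coe_eq_coe, Multiset.sort_eq, Multiset.coe_add]

theorem inner_s_right (x : Λ) (m : YoungDiagram) : S.inner x (S.s m) = S.s.repr x m := by
  have h : S.inner.flip (S.s m) = Finsupp.lapply m ∘ₗ S.s.repr.toLinearMap :=
    S.s.ext fun μ => by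
      simp [S.inner_schur, Finsupp.single_apply]
  exact LinearMap.congr_fun h x

theorem inner_injective : Function.Injective S.inner := fun x y h =>
  S.s.ext_elem fun m => by rw [← S.inner_s_right, ← S.inner_s_right, h]

theorem ext_inner_p {x y : Λ} (h : ∀ τ, S.inner x (S.p τ) = S.inner y (S.p τ)) : x = y :=
  S.inner_injective (S.p.ext h)

theorem finsum_inner_s_smul {M : Type*} [AddCommMonoid M] [Module ℚ M] (Φ : Λ →ₗ[ℚ] M) (x : Λ) :
    ∑ᶠ m, S.inner x (S.s m) • Φ (S.s m) = Φ x := by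
  simpa only [S.inner_s_right] using S.s.finsum_repr_smul_map Φ x

theorem hasFiniteSupport_inner_s {x : Λ} : Function.HasFiniteSupport fun m => S.inner x (S.s m) := by
  simpa only [S.inner_s_right] using (S.s.repr x).hasFiniteSupport

theorem D_add (x y : Λ) : S.D (x + y) = S.D x + S.D y :=
  LinearMap.ext fun g => S.inner_injective <| LinearMap.ext fun h => by
    simp only [LinearMap.add_apply, map_add, S.D_adjoint, add_mul]

theorem D_smul (c : ℚ) (x : Λ) : S.D (c • x) = c • S.D x :=
  LinearMap.ext fun g => S.inner_injective <| LinearMap.ext fun h => by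
    simp only [LinearMap.smul_apply, map_smul, S.D_adjoint, smul_mul_assoc]

def Dₗ : Λ →ₗ[ℚ] Λ →ₗ[ℚ] Λ where
  toFun := S.D
  map_add' := S.D_add
  map_smul' := S.D_smul

theorem Dₗ_apply (x : Λ) : S.Dₗ x = S.D x := rfl

theorem inner_kron_p (x y : Λ) (τ : YoungDiagram) :
    S.inner (S.kron x y) (S.p τ) = S.inner x (S.p τ) * S.inner y (S.p τ) := by
  have h : S.kron.compr₂ (S.inner.flip (S.p τ))
      = (LinearMap.mul ℚ ℚ).compl₁₂ (S.inner.flip (S.p τ)) (S.inner.flip (S.p τ)) := by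
    refine S.p.ext fun μ => S.p.ext fun ν => ?_
    simp only [LinearMap.compr₂_apply, LinearMap.compl₁₂_apply, LinearMap.flip_apply,
      LinearMap.mul_apply', S.kron_power]
    split_ifs with hμν
    · subst hμν
      rw [map_smul, LinearMap.smul_apply, S.inner_power, smul_eq_mul]
      split_ifs <;> ring
    · rw [map_zero, LinearMap.zero_apply, S.inner_power μ τ, S.inner_power ν τ]
      split_ifs <;> simp_all
  exact LinearMap.congr_fun (LinearMap.congr_fun h x) y

theorem kron_p_left (ρ : YoungDiagram) (x : Λ) :
    S.kron (S.p ρ) x = S.inner x (S.p ρ) • S.p ρ := by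
  have h : S.kron (S.p ρ) = (S.inner.flip (S.p ρ)).smulRight (S.p ρ) :=
    S.p.ext fun μ => by
      simp only [S.kron_power, LinearMap.smulRight_apply, LinearMap.flip_apply, S.inner_power,
        eq_comm (a := ρ)]
      split_ifs with h
      · subst h; rfl
      · simp
  exact LinearMap.congr_fun h x

theorem D_p_kron (ρ : YoungDiagram) (f g : Λ) :
    S.D (S.p ρ) (S.kron f g) = S.kron (S.D (S.p ρ) f) (S.D (S.p ρ) g) :=
  S.ext_inner_p fun τ => by
    simp only [S.inner_kron_p, S.D_adjoint, S.p_mul]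

theorem D_kron_eq_finsum (x f g : Λ) :
    S.D x (S.kron f g) = ∑ᶠ l, S.kron (S.D (S.s l) f) (S.D (S.kron x (S.s l)) g) := by
  calc S.D x (S.kron f g)
      = ∑ ρ ∈ (S.p.repr x).support, S.p.repr x ρ • S.kron (S.D (S.p ρ) f) (S.D (S.p ρ) g) := by
        simp only [← S.D_p_kron]
        exact (S.p.sum_repr_smul_map (S.Dₗ.flip (S.kron f g)) x).symm
    _ = ∑ ρ ∈ (S.p.repr x).support, ∑ᶠ l,
          S.p.repr x ρ • S.inner (S.p ρ) (S.s l) • S.kron (S.D (S.s l) f) (S.D (S.p ρ) g) := by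
        refine Finset.sum_congr rfl fun ρ _ => ?_
        rw [← smul_finsum]
        exact congrArg (S.p.repr x ρ • ·)
          (S.finsum_inner_s_smul (S.kron.flip (S.D (S.p ρ) g) ∘ₗ S.Dₗ.flip f) (S.p ρ)).symm
    _ = ∑ᶠ l, ∑ ρ ∈ (S.p.repr x).support,
          S.p.repr x ρ • S.inner (S.p ρ) (S.s l) • S.kron (S.D (S.s l) f) (S.D (S.p ρ) g) :=
        sum_finsum_comm _ _ fun ρ _ =>
          (S.hasFiniteSupport_inner_s.fun_smul_left _).fun_smul_right _
    _ = _ := finsum_congr fun l => by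
        refine Eq.trans (Finset.sum_congr rfl fun ρ _ => ?_)
          (S.p.sum_repr_smul_map (S.kron (S.D (S.s l) f) ∘ₗ S.Dₗ.flip g ∘ₗ S.kron.flip (S.s l)) x)
        simp only [LinearMap.comp_apply, LinearMap.flip_apply, Dₗ_apply, S.kron_p_left, map_smul,
          S.inner_symm (S.s l)]

/-- Skewing a Kronecker product:
`D_β(f ∗ g) = ∑_{λ,μ} g_{β,λ,μ} D_λ(f) ∗ D_μ(g)`, where
`g_{β,λ,μ} = ⟨s_β ∗ s_λ, s_μ⟩` are the Kronecker coefficients. -/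
theorem skewing_kron (β : YoungDiagram) (f g : Λ) :
    S.D (S.s β) (S.kron f g) =
      ∑ᶠ (l : YoungDiagram) (m : YoungDiagram),
        S.inner (S.kron (S.s β) (S.s l)) (S.s m) •
          S.kron (S.D (S.s l) f) (S.D (S.s m) g) := by
  rw [S.D_kron_eq_finsum]
  exact finsum_congr fun l =>
    (S.finsum_inner_s_smul (S.kron (S.D (S.s l) f) ∘ₗ S.Dₗ.flip g) _).symm

end SymmFn
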